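/- arXiv:2001.00108 — 3 statements merged into one kernel-verified Lean document; each statement's English description precedes it below -/
import Mathlib

section
/- Define I_R = ∫₀^{π} dφ / |cosh(πR e^{iφ})| for R > 0. Then I_R = O(1/R) as R → ∞ through positive integers; i.e., there is a constant C such that I_R ≤ C/R for all sufficiently large integers R. -/
/-!
On the circle `z = π R e^{iφ}` one has `‖cosh z‖² = sinh² (π R cos φ) + cos² (π R sin φ)`.
Put `t = |φ - π/2|`. If `2 R t ≥ 1`, Jordan's inequality gives `|π R cos φ| ≥ 2 R t`, so the
`sinh` term alone is at least `e^{2 R t} / 4`. If `2 R t ≤ 1`, then `π R sin φ = π R cos t` lies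
within `π/8` of the multiple `R π` of `π` (this is where `R ∈ ℕ` is used), so the `cos` term is
at least `1/2`. Hence `1 / ‖cosh z‖ ≤ 6 e^{-2 R |φ - π/2|}` on `[0, π]`, whose integral is at
most `6 / R`.
-/

open Real Complex

theorem Complex.norm_cosh_add_mul_I_sq (x y : ℝ) :
    ‖Complex.cosh (x + y * I)‖ ^ 2 = Real.sinh x ^ 2 + Real.cos y ^ 2 := by
  have hcosh : Complex.cosh (x + y * I) =
      (Real.cosh x * Real.cos y : ℝ) + (Real.sinh x * Real.sin y : ℝ) * I := by
    rw [Complex.cosh_add, Complex.cosh_mul_I, Complex.sinh_mul_I]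
    push_cast
    ring
  rw [hcosh, Complex.sq_norm, Complex.normSq_add_mul_I]
  nlinarith [Real.cosh_sq x, Real.sin_sq_add_cos_sq y]

theorem Complex.norm_cosh_ofReal_mul_exp_mul_I_sq (r φ : ℝ) :
    ‖Complex.cosh (r * Complex.exp (I * φ))‖ ^ 2 =
      Real.sinh (r * Real.sin |φ - π / 2|) ^ 2 + Real.cos (r * Real.cos (φ - π / 2)) ^ 2 := by
  have hpolar : (r : ℂ) * Complex.exp (I * φ) =
      (r * Real.cos φ : ℝ) + (r * Real.sin φ : ℝ) * I := by
    rw [mul_comm I, Complex.exp_mul_I]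
    push_cast
    ring
  rw [hpolar, Complex.norm_cosh_add_mul_I_sq, Real.cos_sub_pi_div_two,
    ← neg_neg (Real.cos φ), ← Real.sin_sub_pi_div_two]
  rcases abs_cases (φ - π / 2) with ⟨h, -⟩ | ⟨h, -⟩ <;>
    simp only [h, Real.sin_neg, mul_neg, Real.sinh_neg, neg_sq]

theorem one_half_le_abs_cos_pi_mul_natCast_mul_cos (R : ℕ) {t : ℝ} (ht : 2 * R * |t| ≤ 1) :
    1 / 2 ≤ |Real.cos (π * R * Real.cos t)| := by
  set u := π * R * (1 - Real.cos t)
  rw [show π * R * Real.cos t = R * π - u by ring, Real.cos_nat_mul_pi_sub, abs_mul, abs_pow,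
    abs_neg, abs_one, one_pow, one_mul]
  have hR : (R : ℝ) ≤ R ^ 2 := by exact_mod_cast Nat.le_self_pow two_ne_zero R
  have hRt : (R * |t|) ^ 2 ≤ 1 / 4 := by
    have : 0 ≤ R * |t| := by positivity
    nlinarith
  have hu₀ : 0 ≤ u := mul_nonneg (by positivity) (sub_nonneg.2 (Real.cos_le_one t))
  have hu₁ : u ≤ 1 := by
    have : 1 - Real.cos t ≤ t ^ 2 / 2 := by linarith [Real.one_sub_sq_div_two_le_cos (x := t)]
    calc u ≤ π * R * (t ^ 2 / 2) := mul_le_mul_of_nonneg_left this (by positivity)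
      _ ≤ π * (R * |t|) ^ 2 / 2 := by
        rw [mul_pow, sq_abs]
        nlinarith [mul_nonneg (sub_nonneg.2 hR) (mul_nonneg Real.pi_pos.le (sq_nonneg t))]
      _ ≤ 1 := by nlinarith [Real.pi_lt_four]
  calc 1 / 2 ≤ 1 - u ^ 2 / 2 := by nlinarith
    _ ≤ Real.cos u := Real.one_sub_sq_div_two_le_cos
    _ ≤ |Real.cos u| := le_abs_self _

theorem Real.exp_div_four_le_sinh {x : ℝ} (hx : 1 / 2 ≤ x) : Real.exp x / 4 ≤ Real.sinh x := by
  have h2 : 2 ≤ Real.exp x * Real.exp x := by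
    rw [← Real.exp_add]; linarith [Real.add_one_le_exp (x + x)]
  rw [Real.sinh_eq, Real.exp_neg]
  have := Real.exp_pos x
  field_simp
  nlinarith

theorem integral_exp_neg_mul_abs_le {a b : ℝ} (ha : 0 ≤ a) (hb : 0 < b) :
    ∫ x in -a..a, Real.exp (-(b * |x|)) ≤ 2 / b := by
  have hcont : Continuous fun x : ℝ => Real.exp (-(b * |x|)) := by fun_prop
  have hsymm : ∫ x in -a..0, Real.exp (-(b * |x|)) = ∫ x in 0..a, Real.exp (-(b * |x|)) := by
    simpa using (intervalIntegral.integral_comp_neg (a := 0) (b := a)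
      (fun x => Real.exp (-(b * |x|)))).symm
  have hhalf : ∫ x in 0..a, Real.exp (-(b * |x|)) = (1 - Real.exp (-(b * a))) / b := by
    rw [intervalIntegral.integral_congr (g := fun x => Real.exp (-b * x)) fun x hx => by
      rw [Set.uIcc_of_le ha] at hx; simp [abs_of_nonneg hx.1]]
    rw [intervalIntegral.integral_comp_mul_left Real.exp (neg_ne_zero.2 hb.ne'), integral_exp,
      mul_zero, Real.exp_zero, smul_eq_mul]
    field_simp
    ring
  rw [← intervalIntegral.integral_add_adjacent_intervals (hcont.intervalIntegrable _ _)
    (hcont.intervalIntegrable _ _), hsymm, hhalf]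
  have := Real.exp_pos (-(b * a))
  rw [← add_div, div_le_div_iff_of_pos_right hb]
  linarith

theorem exp_div_six_le_norm_cosh (R : ℕ) {φ : ℝ} (hφ : φ ∈ Set.Icc 0 π) :
    Real.exp (2 * R * |φ - π / 2|) / 6 ≤ ‖Complex.cosh (π * R * Complex.exp (I * φ))‖ := by
  set t := |φ - π / 2|
  have ht : t ≤ π / 2 := abs_le.2 ⟨by linarith [hφ.1], by linarith [hφ.2]⟩
  have hsq := Complex.norm_cosh_ofReal_mul_exp_mul_I_sq (π * R) φ
  push_cast at hsq
  have hsinh : |Real.sinh (π * R * Real.sin t)| ≤ ‖Complex.cosh (π * R * Complex.exp (I * φ))‖ :=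
    abs_le_of_sq_le_sq (hsq ▸ le_add_of_nonneg_right (sq_nonneg _)) (norm_nonneg _)
  have hcos : |Real.cos (π * R * Real.cos (φ - π / 2))| ≤
      ‖Complex.cosh (π * R * Complex.exp (I * φ))‖ :=
    abs_le_of_sq_le_sq (hsq ▸ le_add_of_nonneg_left (sq_nonneg _)) (norm_nonneg _)
  rcases le_total (2 * R * t) 1 with hnear | hfar
  · calc Real.exp (2 * R * t) / 6 ≤ Real.exp 1 / 6 := by gcongr
      _ ≤ 1 / 2 := by linarith [Real.exp_one_lt_d9]
      _ ≤ _ := (one_half_le_abs_cos_pi_mul_natCast_mul_cos R hnear).trans hcos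
  · have hjordan : 2 * R * t ≤ π * R * Real.sin t := by
      have := Real.mul_le_sin (abs_nonneg _) ht
      calc 2 * R * t = π * R * (2 / π * t) := by field_simp
        _ ≤ π * R * Real.sin t := by gcongr
    calc Real.exp (2 * R * t) / 6 ≤ Real.exp (2 * R * t) / 4 := by gcongr; norm_num
      _ ≤ Real.sinh (2 * R * t) := Real.exp_div_four_le_sinh (by linarith)
      _ ≤ Real.sinh (π * R * Real.sin t) := Real.sinh_le_sinh.2 hjordan
      _ ≤ _ := (le_abs_self _).trans hsinh

theorem I_R_isBigO_inv :
    ∃ C : ℝ, ∃ R₀ : ℕ, ∀ R : ℕ, R₀ ≤ R →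
      (∫ φ in (0:ℝ)..π,
        1 / ‖Complex.cosh (π * R * Complex.exp (Complex.I * φ))‖) ≤ C / R := by
  refine ⟨6, 1, fun R hR => ?_⟩
  have hR : (0 : ℝ) < R := by exact_mod_cast hR
  calc (∫ φ in (0:ℝ)..π, 1 / ‖Complex.cosh (π * R * Complex.exp (Complex.I * φ))‖)
      ≤ ∫ φ in (0:ℝ)..π, 6 * Real.exp (-(2 * R * |φ - π / 2|)) := by
        rw [intervalIntegral.integral_of_le Real.pi_pos.le,
          intervalIntegral.integral_of_le Real.pi_pos.le]
        refine MeasureTheory.setIntegral_mono_of_nonneg (fun _ _ => by positivity)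
          (fun φ hφ => ?_) (Continuous.integrableOn_Ioc (by fun_prop))
        have := exp_div_six_le_norm_cosh R (Set.Ioc_subset_Icc_self hφ)
        rw [Real.exp_neg, ← div_eq_mul_inv, ← one_div_div (Real.exp _) 6]
        exact one_div_le_one_div_of_le (by positivity) this
    _ = 6 * ∫ x in -(π / 2)..π / 2, Real.exp (-(2 * R * |x|)) := by
        rw [intervalIntegral.integral_const_mul,
          intervalIntegral.integral_comp_sub_right (fun x => Real.exp (-(2 * R * |x|)))]
        ring_nf
    _ ≤ 6 * (2 / (2 * R)) := by
        gcongr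
        exact integral_exp_neg_mul_abs_le (by positivity) (by positivity)
    _ = 6 / R := by field_simp
end

section
/- For each integer n ≥ 2 and each complex ω with Re ω > -1/2, the residue at z = i(n - 1/2) of the function z ↦ ζ(1/2 - iz)/((1/2 - iz + ω)·cosh(πz)) equals (-1)^{n+1} ζ(n)/(πi (n + ω)). -/
/-! `cosh (π z)` has a simple zero at `c = i(n - 1/2)`, with derivative
`π sinh (π c) = (-1)^(n+1) π i`, and `ζ(1/2 - iz)/(1/2 - iz + ω)` is holomorphic at `c` because
`1/2 - ic = n ≠ 1` and `n + ω ≠ 0`. Writing `cosh (π z) = (z - c) · d(z)` with `d` the divided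
difference (holomorphic at `c` by the removable singularity theorem, and nonzero near `c`), the
function is `(z - c)⁻¹ h(z)` with `h` holomorphic near `c`, so Cauchy's integral formula on small
circles gives the residue `h(c)`. -/

open Real Complex Filter

/-- `f` has residue `r` at `c`: the circle integral of `f` around small circles
centred at `c` equals `2πi·r`. -/
def HasResidueAt (f : ℂ → ℂ) (c r : ℂ) : Prop :=
  ∀ᶠ ε in nhdsWithin 0 (Set.Ioi (0:ℝ)), (∮ z in C(c, ε), f z) = 2 * π * Complex.I * r

open Metric Topology

theorem HasResidueAt.congr {f g : ℂ → ℂ} {c r : ℂ} (hf : HasResidueAt f c r)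
    (hfg : f =ᶠ[𝓝[≠] c] g) : HasResidueAt g c r := by
  obtain ⟨R, hR, hball⟩ := eventually_nhds_iff_ball.mp (eventually_nhdsWithin_iff.mp hfg)
  filter_upwards [hf, Ioo_mem_nhdsGT hR] with ε hε ⟨hε0, hεR⟩
  rw [← hε]
  refine (circleIntegral.integral_congr hε0.le fun z hz => ?_).symm
  have hzc : z ≠ c := ne_of_mem_sphere hz hε0.ne'
  exact hball z (sphere_subset_ball hεR hz) hzc

theorem hasResidueAt_sub_inv_mul {h : ℂ → ℂ} {c : ℂ}
    (hh : ∀ᶠ z in 𝓝 c, DifferentiableAt ℂ h z) :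
    HasResidueAt (fun z => (z - c)⁻¹ * h z) c (h c) := by
  obtain ⟨R, hR, hball⟩ := eventually_nhds_iff_ball.mp hh
  filter_upwards [Ioo_mem_nhdsGT hR] with ε ⟨hε0, hεR⟩
  have hd : DifferentiableOn ℂ h (closedBall c ε) := fun z hz =>
    (hball z (closedBall_subset_ball hεR hz)).differentiableWithinAt
  simpa only [smul_eq_mul] using hd.circleIntegral_sub_inv_smul (mem_ball_self hε0)

theorem hasResidueAt_div_of_hasDerivAt {g k : ℂ → ℂ} {c k' : ℂ}
    (hg : ∀ᶠ z in 𝓝 c, DifferentiableAt ℂ g z)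
    (hk : ∀ᶠ z in 𝓝 c, DifferentiableAt ℂ k z)
    (hkc : k c = 0) (hk' : HasDerivAt k k' c) (hk'0 : k' ≠ 0) :
    HasResidueAt (fun z => g z / k z) c (g c / k') := by
  have hdslope_c : dslope k c c = k' := by rw [dslope_same, hk'.deriv]
  have hdslope_diff : ∀ᶠ z in 𝓝 c, DifferentiableAt ℂ (dslope k c) z := by
    have hon : DifferentiableOn ℂ (dslope k c) {z | DifferentiableAt ℂ k z} :=
      (Complex.differentiableOn_dslope hk).mpr fun z hz => hz.differentiableWithinAt
    filter_upwards [hk.eventually_nhds] with z hz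
    exact hon.differentiableAt hz
  have hdslope_ne : ∀ᶠ z in 𝓝 c, dslope k c z ≠ 0 :=
    (continuousAt_dslope_same.mpr hk'.differentiableAt).eventually_ne (hdslope_c ▸ hk'0)
  have hres := hasResidueAt_sub_inv_mul (h := fun z => g z / dslope k c z) (c := c) <| by
    filter_upwards [hg, hdslope_diff, hdslope_ne] with z hgz hdz hne
    exact hgz.div hdz hne
  rw [← hdslope_c]
  refine hres.congr ?_
  filter_upwards [self_mem_nhdsWithin] with z hzc
  have hkz : k z = (z - c) * dslope k c z := by
    simpa [hkc] using (sub_smul_dslope k c z).symm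
  simp only [hkz, div_eq_mul_inv, mul_inv]
  ring

theorem eventually_differentiableAt_riemannZeta_div {s : ℂ → ℂ} {c ω : ℂ}
    (hs : Differentiable ℂ s) (hs1 : s c ≠ 1) (hsω : s c + ω ≠ 0) :
    ∀ᶠ z in 𝓝 c, DifferentiableAt ℂ (fun z => riemannZeta (s z) / (s z + ω)) z := by
  filter_upwards [hs.continuous.continuousAt.eventually_ne hs1,
    (hs.continuous.add continuous_const).continuousAt.eventually_ne hsω] with z hz1 hzω
  exact ((differentiableAt_riemannZeta hz1).comp z (hs z)).div (by fun_prop) hzω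

theorem cosh_pi_mul_I_mul_nat_sub_half (n : ℕ) : cosh (π * (I * (n - 1/2))) = 0 := by
  have harg : (π : ℂ) * (I * (n - 1/2)) = ((n * π - π / 2 : ℝ) : ℂ) * I := by
    push_cast; ring
  rw [harg, cosh_mul_I, ← ofReal_cos, Real.cos_nat_mul_pi_sub, Real.cos_pi_div_two]
  simp

theorem sinh_pi_mul_I_mul_nat_sub_half (n : ℕ) :
    sinh (π * (I * (n - 1/2))) = (-1) ^ (n + 1) * I := by
  have harg : (π : ℂ) * (I * (n - 1/2)) = ((n * π - π / 2 : ℝ) : ℂ) * I := by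
    push_cast; ring
  rw [harg, sinh_mul_I, ← ofReal_sin, Real.sin_nat_mul_pi_sub, Real.sin_pi_div_two]
  push_cast
  ring

theorem residue_at_upper_poles (n : ℕ) (hn : 2 ≤ n) (ω : ℂ) (hω : -(1/2) < ω.re) :
    HasResidueAt
      (fun z : ℂ => riemannZeta (1/2 - Complex.I * z) /
        ((1/2 - Complex.I * z + ω) * Complex.cosh (π * z)))
      (Complex.I * ((n : ℂ) - 1/2))
      ((-1 : ℂ) ^ (n + 1) * riemannZeta n / (π * Complex.I * ((n : ℂ) + ω))) := by
  set c : ℂ := I * ((n : ℂ) - 1/2)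
  set s : ℂ → ℂ := fun z => 1/2 - I * z
  have hsc : s c = n := by simp only [s, c]; ring_nf; simp
  have hn1 : (n : ℂ) ≠ 1 := by exact_mod_cast (by omega : n ≠ 1)
  have hnω : (n + ω : ℂ) ≠ 0 := fun h0 => by
    have hre := congrArg re h0
    simp only [add_re, natCast_re, zero_re] at hre
    have hn' : (2 : ℝ) ≤ n := by exact_mod_cast hn
    linarith
  have hg := eventually_differentiableAt_riemannZeta_div (ω := ω)
    (by fun_prop : Differentiable ℂ s) (hsc ▸ hn1) (hsc ▸ hnω)
  have hderiv : HasDerivAt (fun z : ℂ => cosh (π * z)) (sinh (π * c) * π) c := by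
    simpa using ((hasDerivAt_id c).const_mul (π : ℂ)).ccosh
  have hsinh : sinh (π * c) = (-1) ^ (n + 1) * I := sinh_pi_mul_I_mul_nat_sub_half n
  have hres := hasResidueAt_div_of_hasDerivAt hg (.of_forall fun z => by fun_prop)
    (cosh_pi_mul_I_mul_nat_sub_half n) hderiv (by simp [hsinh, Real.pi_ne_zero])
  convert hres using 1
  · ext z; simp only [s, div_div]
  · rw [hsc, hsinh]
    field_simp
    rw [← pow_mul, Even.neg_one_pow ⟨n + 1, by ring⟩, one_mul]
end

section
/- For every complex ω with Re ω > -1/2, the function z ↦ ζ(1/2 - iz)/((1/2 - iz + ω)·cosh(πz)) has a double pole at z = i/2, and its residue there equals (1/(πi))·(γ(1+ω) - 1)/(1+ω)², where γ is the Euler–Mascheroni constant. -/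
/-! With `s = 1/2 - iz` we have `s - 1 = -i(z - i/2)` and `ζ(s) = ζ₁(s)/(s - 1)` with
`ζ₁` entire, `ζ₁(1) = 1` and `ζ₁'(1) = γ`. Likewise `cosh(πz) = (z - i/2)·C(z)` with `C` entire,
`C(i/2) = πi`, and `C'(i/2) = 0` because `cosh(π(i - z)) = -cosh(πz)` makes `C` symmetric about `i/2`.
So the function is `g(z)/(z - i/2)²` with `g` analytic and `g(i/2) ≠ 0`, and Cauchy's formula for the
derivative gives the residue `g'(i/2)`. -/

open Real Complex Filter

open Metric Topology

section Symmetry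

variable {𝕜 E : Type*} [NontriviallyNormedField 𝕜] [NormedAddCommGroup E] [NormedSpace 𝕜 E]

theorem dslope_two_mul_sub_of_antisymm {f : 𝕜 → E} {c : 𝕜} (hf : ∀ z, f (2 * c - z) = -f z)
    (z : 𝕜) : dslope f c (2 * c - z) = dslope f c z := by
  rcases eq_or_ne z c with rfl | hz
  · rw [two_mul, add_sub_cancel_right]
  have hz' : 2 * c - z ≠ c := fun h => hz (by linear_combination -h)
  have hfc : f c = -f c := by simpa [two_mul] using hf c
  rw [dslope_of_ne _ hz', dslope_of_ne _ hz, slope_def_module, slope_def_module, hf,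
    show 2 * c - z - c = -(z - c) by ring, inv_neg, neg_smul, ← smul_neg]
  congr 1
  rw [neg_sub, sub_neg_eq_add, add_comm, sub_eq_add_neg, ← hfc]

theorem deriv_eq_zero_of_two_mul_sub_eq [CharZero 𝕜] {g : 𝕜 → E} {c : 𝕜} (hg : ∀ z, g (2 * c - z) = g z) :
    deriv g c = 0 := by
  have h := deriv_comp_const_sub g (2 * c) c
  rw [funext hg, two_mul, add_sub_cancel_right, eq_neg_iff_add_eq_zero, ← two_smul 𝕜] at h
  exact (smul_eq_zero.mp h).resolve_left two_ne_zero

end Symmetry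

section DoublePole

variable {f g : ℂ → ℂ} {c : ℂ}

theorem tendsto_sub_sq_mul_of_eq_div_sub_sq (hg : ContinuousAt g c)
    (hfg : ∀ᶠ z in 𝓝[≠] c, f z = g z / (z - c) ^ 2) :
    Tendsto (fun z => (z - c) ^ 2 * f z) (𝓝[≠] c) (𝓝 (g c)) := by
  refine hg.continuousWithinAt.tendsto.congr' ?_
  filter_upwards [hfg, self_mem_nhdsWithin] with z hz hzc
  rw [hz, mul_div_cancel₀ _ (pow_ne_zero 2 (sub_ne_zero.mpr hzc))]

theorem hasResidueAt_of_eq_div_sub_sq (hg : AnalyticAt ℂ g c)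
    (hfg : ∀ᶠ z in 𝓝[≠] c, f z = g z / (z - c) ^ 2) :
    HasResidueAt f c (deriv g c) := by
  obtain ⟨δ, hδ, hball⟩ := Metric.eventually_nhds_iff.mp
    (hg.eventually_analyticAt.and (eventually_nhdsWithin_iff.mp hfg))
  filter_upwards [Ioo_mem_nhdsGT hδ] with ε ⟨hε, hεδ⟩
  have hcauchy := two_pi_I_inv_smul_circleIntegral_sub_sq_inv_smul_of_differentiable
    isOpen_ball (closedBall_subset_ball hεδ)
    (fun z hz => (hball hz).1.differentiableAt.differentiableWithinAt) (mem_ball_self hε)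
  rw [inv_smul_eq_iff₀ (by simp [pi_ne_zero])] at hcauchy
  rw [← smul_eq_mul, ← hcauchy]
  refine circleIntegral.integral_congr hε.le fun z hz => ?_
  have hzc : z ≠ c := by rintro rfl; simp [hε.ne] at hz
  rw [(hball ((mem_sphere.mp hz).trans_lt hεδ)).2 hzc, smul_eq_mul, div_eq_inv_mul]

end DoublePole

noncomputable def coshPiDslope : ℂ → ℂ := dslope (fun z => Complex.cosh (π * z)) (I / 2)

theorem cosh_pi_mul_I_half : Complex.cosh (π * (I / 2)) = 0 := by
  rw [show (π : ℂ) * (I / 2) = π / 2 * I by ring, cosh_mul_I, Complex.cos_pi_div_two]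

theorem cosh_pi_mul_I_sub (z : ℂ) : Complex.cosh (π * (I - z)) = -Complex.cosh (π * z) := by
  rw [mul_sub, Complex.cosh_sub, cosh_mul_I, Complex.cos_pi, sinh_mul_I, Complex.sin_pi]
  ring

theorem cosh_pi_mul_eq_sub_mul_coshPiDslope (z : ℂ) :
    Complex.cosh (π * z) = (z - I / 2) * coshPiDslope z := by
  simpa [coshPiDslope, cosh_pi_mul_I_half] using
    (sub_smul_dslope (fun z => Complex.cosh (π * z)) (I / 2) z).symm

@[fun_prop]
theorem differentiable_coshPiDslope : Differentiable ℂ coshPiDslope := by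
  rw [← differentiableOn_univ, coshPiDslope, differentiableOn_dslope univ_mem]
  fun_prop

theorem coshPiDslope_I_half : coshPiDslope (I / 2) = π * I := by
  have h := ((hasDerivAt_id' (I / 2)).const_mul (π : ℂ)).ccosh
  rw [coshPiDslope, dslope_same, h.deriv, mul_one,
    show (π : ℂ) * (I / 2) = π / 2 * I by ring, sinh_mul_I, Complex.sin_pi_div_two]
  ring

theorem deriv_coshPiDslope_I_half : deriv coshPiDslope (I / 2) = 0 := by
  refine deriv_eq_zero_of_two_mul_sub_eq fun z => ?_
  refine dslope_two_mul_sub_of_antisymm (fun z => ?_) z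
  rw [mul_div_cancel₀ _ two_ne_zero, cosh_pi_mul_I_sub]

noncomputable def zetaCoshRegularPart (ω z : ℂ) : ℂ :=
  I * riemannZeta₁ (1 / 2 - I * z) / ((1 / 2 - I * z + ω) * coshPiDslope z)

theorem eq_zetaCoshRegularPart_div_sq (ω : ℂ) {z : ℂ} (hz : z ≠ I / 2) :
    riemannZeta (1 / 2 - I * z) / ((1 / 2 - I * z + ω) * Complex.cosh (π * z)) =
      zetaCoshRegularPart ω z / (z - I / 2) ^ 2 := by
  have hs : (1 / 2 : ℂ) - I * z - 1 = -I * (z - I / 2) := by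
    linear_combination (-(1 / 2) : ℂ) * I_mul_I
  have hs₁ : (1 / 2 : ℂ) - I * z ≠ 1 :=
    sub_ne_zero.mp (hs ▸ mul_ne_zero (neg_ne_zero.mpr I_ne_zero) (sub_ne_zero.mpr hz))
  rw [riemannZeta_eq_inv_sub_mul hs₁, hs, cosh_pi_mul_eq_sub_mul_coshPiDslope, zetaCoshRegularPart]
  field_simp
  rw [I_sq]
  ring

theorem one_half_sub_I_mul_I_half : (1 / 2 : ℂ) - I * (I / 2) = 1 := by
  linear_combination (-(1 / 2) : ℂ) * I_mul_I

theorem zetaCoshRegularPart_denom_ne_zero {ω : ℂ} (hω : 1 + ω ≠ 0) :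
    (1 / 2 - I * (I / 2) + ω) * coshPiDslope (I / 2) ≠ 0 := by
  rw [one_half_sub_I_mul_I_half, coshPiDslope_I_half]
  exact mul_ne_zero hω (mul_ne_zero (ofReal_ne_zero.mpr pi_ne_zero) I_ne_zero)

theorem analyticAt_zetaCoshRegularPart {ω : ℂ} (hω : 1 + ω ≠ 0) :
    AnalyticAt ℂ (zetaCoshRegularPart ω) (I / 2) := by
  exact (Differentiable.analyticAt (by fun_prop) _).div
    (Differentiable.analyticAt (by fun_prop) _) (zetaCoshRegularPart_denom_ne_zero hω)

theorem zetaCoshRegularPart_I_half (ω : ℂ) :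
    zetaCoshRegularPart ω (I / 2) = 1 / (π * (1 + ω)) := by
  rw [zetaCoshRegularPart, one_half_sub_I_mul_I_half, coshPiDslope_I_half, riemannZeta₁_one]
  field_simp

theorem hasDerivAt_zetaCoshRegularPart {ω : ℂ} (hω : 1 + ω ≠ 0) :
    HasDerivAt (zetaCoshRegularPart ω)
      (1 / (π * I) * ((eulerMascheroniConstant * (1 + ω) - 1) / (1 + ω) ^ 2)) (I / 2) := by
  have hs := ((hasDerivAt_id' (I / 2)).const_mul I).const_sub (1 / 2 : ℂ)
  have hζ : HasDerivAt riemannZeta₁ eulerMascheroniConstant 1 :=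
    deriv_riemannZeta₁_one ▸ (differentiable_riemannZeta₁ 1).hasDerivAt
  have hC : HasDerivAt coshPiDslope 0 (I / 2) :=
    deriv_coshPiDslope_I_half ▸ (differentiable_coshPiDslope _).hasDerivAt
  have h := ((hζ.comp_of_eq (I / 2) hs one_half_sub_I_mul_I_half.symm).const_mul I).div
    ((hs.add_const ω).mul hC) (zetaCoshRegularPart_denom_ne_zero hω)
  refine h.congr_deriv ?_
  simp only [Pi.mul_apply, Function.comp_apply, one_half_sub_I_mul_I_half, coshPiDslope_I_half,
    riemannZeta₁_one]
  field_simp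
  rw [I_sq]
  ring

theorem double_pole_residue (ω : ℂ) (hω : -(1/2) < ω.re) :
    (∃ c : ℂ, c ≠ 0 ∧
      Tendsto (fun z : ℂ => (z - Complex.I / 2) ^ 2 *
          (riemannZeta (1/2 - Complex.I * z) /
            ((1/2 - Complex.I * z + ω) * Complex.cosh (π * z))))
        (nhdsWithin (Complex.I / 2) {Complex.I / 2}ᶜ) (nhds c)) ∧
    HasResidueAt
      (fun z : ℂ => riemannZeta (1/2 - Complex.I * z) /
        ((1/2 - Complex.I * z + ω) * Complex.cosh (π * z)))
      (Complex.I / 2)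
      ((1 / (π * Complex.I)) *
        (((Real.eulerMascheroniConstant : ℂ) * (1 + ω) - 1) / (1 + ω) ^ 2)) := by
  have hω₁ : 1 + ω ≠ 0 := fun h => by
    have := congrArg re h
    simp only [add_re, one_re, zero_re] at this
    linarith
  have hf : ∀ᶠ z in 𝓝[≠] (I / 2), riemannZeta (1 / 2 - I * z) /
      ((1 / 2 - I * z + ω) * Complex.cosh (π * z)) = zetaCoshRegularPart ω z / (z - I / 2) ^ 2 :=
    eventually_nhdsWithin_of_forall fun z hz => eq_zetaCoshRegularPart_div_sq ω hz
  have hg := analyticAt_zetaCoshRegularPart hω₁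
  refine ⟨⟨_, ?_, tendsto_sub_sq_mul_of_eq_div_sub_sq hg.continuousAt hf⟩, ?_⟩
  · simp [zetaCoshRegularPart_I_half, hω₁, pi_ne_zero]
  · rw [← (hasDerivAt_zetaCoshRegularPart hω₁).deriv]
    exact hasResidueAt_of_eq_div_sub_sq hg hf
end
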